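/- Let $p, r \ge 1$ and let $x_1,\ldots,x_r, y_1,\ldots,y_{p+r-1}$ be indeterminates. Then $\sum_{1 \le c_1 < \cdots < c_p \le p+r-1} \prod_{i=1}^{p}(y_{c_i} - x_{c_i-i+1}) = \sum_{k=0}^{p} e_k(y_1,\ldots,y_{p+r-1}) \, h_{p-k}(-x_1,\ldots,-x_r)$, where $e_k$ is the elementary symmetric polynomial of degree $k$ and $h_j$ is the complete homogeneous symmetric polynomial of degree $j$. -/

import Mathlib

open Finset MvPolynomial

/-- Polynomial ring in indeterminates `x_j` (= `X (Sum.inl j)`) and `y_i` (= `X (Sum.inr i)`). -/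
noncomputable abbrev PolyXY : Type := MvPolynomial (ℕ ⊕ ℕ) ℤ

/-- Elementary symmetric polynomial `e_k(y_1, …, y_q)`. -/
noncomputable def esymmY (q k : ℕ) : PolyXY :=
  ∑ S ∈ (Finset.Icc 1 q).powersetCard k, ∏ i ∈ S, X (Sum.inr i)

/-- Complete homogeneous symmetric polynomial `h_j(-x_1, …, -x_r)`. -/
noncomputable def hsymmNegX (r j : ℕ) : PolyXY :=
  ∑ m ∈ (Finset.Icc 1 r).sym j, ((m : Multiset ℕ).map (fun i => - X (Sum.inl i))).prod


lemma Icc_one_succ (q : ℕ) : Finset.Icc 1 (q+1) = insert (q+1) (Finset.Icc 1 q) := by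
  ext a; simp only [mem_Icc, mem_insert]; omega

lemma esymmY_zero (q : ℕ) : esymmY q 0 = 1 := by
  simp [esymmY]

lemma esymmY_overflow (q k : ℕ) (h : q < k) : esymmY q k = 0 := by
  unfold esymmY
  rw [Finset.powersetCard_eq_empty.2 (by simpa using h), Finset.sum_empty]

lemma esymmY_succ (q k : ℕ) :
    esymmY (q+1) (k+1) = esymmY q (k+1) + X (Sum.inr (q+1)) * esymmY q k := by
  unfold esymmY
  have hnot : (q+1) ∉ Finset.Icc 1 q := by simp
  rw [Icc_one_succ, Finset.powersetCard_succ_insert hnot]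
  rw [Finset.sum_union, Finset.sum_image, Finset.mul_sum]
  · congr 1
    refine Finset.sum_congr rfl fun S hS => ?_
    rw [Finset.prod_insert]
    intro hmem
    exact hnot ((Finset.mem_powersetCard.1 hS).1 hmem)
  · intro S hS T hT hST
    have hSn : (q+1) ∉ S := fun hm => hnot ((Finset.mem_powersetCard.1 hS).1 hm)
    have hTn : (q+1) ∉ T := fun hm => hnot ((Finset.mem_powersetCard.1 hT).1 hm)
    have := congrArg (Finset.erase · (q+1)) hST
    simpa [Finset.erase_insert, hSn, hTn] using this
  · rw [Finset.disjoint_left]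
    intro S hS hS2
    obtain ⟨T, hT, rfl⟩ := Finset.mem_image.1 hS2
    exact hnot ((Finset.mem_powersetCard.1 hS).1 (Finset.mem_insert_self _ _))

lemma hsymmNegX_zero (r : ℕ) : hsymmNegX r 0 = 1 := by
  simp [hsymmNegX, Finset.sym_zero]
  rfl

lemma hsymmNegX_novars (j : ℕ) : hsymmNegX 0 (j+1) = 0 := by
  have : Finset.Icc 1 0 = (∅ : Finset ℕ) := by simp
  simp [hsymmNegX, this, Finset.sym_empty]

lemma hsymmNegX_succ (r j : ℕ) :
    hsymmNegX (r+1) (j+1)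
      = hsymmNegX r (j+1) - X (Sum.inl (r+1)) * hsymmNegX (r+1) j := by
  unfold hsymmNegX
  rw [← Finset.sum_filter_add_sum_filter_not ((Finset.Icc 1 (r+1)).sym (j+1))
    (fun m => (r+1) ∈ m)]
  have h2 : ((Finset.Icc 1 (r+1)).sym (j+1)).filter (fun m => (r+1) ∉ m)
      = (Finset.Icc 1 r).sym (j+1) := by
    ext m
    simp only [Finset.mem_filter, Finset.mem_sym_iff, Finset.mem_Icc]
    constructor
    · rintro ⟨h1, h2⟩
      intro a ha
      have := h1 a ha
      have : a ≠ r+1 := fun h => h2 (h ▸ ha)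
      omega
    · intro h
      refine ⟨fun a ha => by have := h a ha; omega, fun hm => by have := h _ hm; omega⟩
  have h1 : ((Finset.Icc 1 (r+1)).sym (j+1)).filter (fun m => (r+1) ∈ m)
      = ((Finset.Icc 1 (r+1)).sym j).image (Sym.cons (r+1)) := by
    ext m
    simp only [Finset.mem_filter, Finset.mem_sym_iff, Finset.mem_image]
    constructor
    · rintro ⟨hmem, hr⟩
      refine ⟨m.erase (r+1) hr, fun a ha => hmem a (Multiset.mem_of_mem_erase ha), Sym.cons_erase hr⟩
    · rintro ⟨m', hm', rfl⟩
      constructor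
      · intro a ha
        rcases Sym.mem_cons.1 ha with h | h
        · subst h; simp
        · exact hm' a h
      · exact Sym.mem_cons_self _ _
  rw [h1, h2, Finset.sum_image (by
    intro a _ b _ h
    exact (Sym.cons_inj_right _ _ _).1 h)]
  rw [sub_eq_add_neg, add_comm]
  congr 1
  rw [Finset.mul_sum, ← Finset.sum_neg_distrib]
  refine Finset.sum_congr rfl fun m hm => ?_
  rw [Sym.coe_cons, Multiset.map_cons, Multiset.prod_cons]
  ring

noncomputable def Lsum (p q : ℕ) : PolyXY :=
  ∑ c ∈ Finset.univ.filter
      (fun c : Fin p → Fin q => ∀ a b : Fin p, a < b → c a < c b),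
      ∏ i : Fin p,
        (X (Sum.inr ((c i : ℕ) + 1)) - X (Sum.inl ((c i : ℕ) + 1 - (i : ℕ))) : PolyXY)

lemma Lsum_zero (q : ℕ) : Lsum 0 q = 1 := by
  unfold Lsum
  rw [Finset.filter_true_of_mem (fun c _ => fun a b h => a.elim0)]
  simp

lemma Lsum_degenerate (p : ℕ) : Lsum (p+1) p = 0 := by
  unfold Lsum
  have : (Finset.univ.filter
      (fun c : Fin (p+1) → Fin p => ∀ a b : Fin (p+1), a < b → c a < c b)) = ∅ := by
    rw [Finset.filter_eq_empty_iff]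
    intro c _ hc
    have hinj : Function.Injective c := by
      intro a b hab
      by_contra hne
      rcases lt_or_gt_of_ne hne with h | h
      · exact absurd hab (ne_of_lt (hc a b h))
      · exact absurd hab.symm (ne_of_lt (hc b a h))
    have := Fintype.card_le_of_injective c hinj
    simp at this
  rw [this, Finset.sum_empty]

lemma Lsum_succ (p q : ℕ) :
    Lsum (p+1) (q+1)
      = (X (Sum.inr (q+1)) - X (Sum.inl (q+1-p))) * Lsum p q + Lsum (p+1) q := by
  unfold Lsum
  rw [← Finset.sum_filter_add_sum_filter_not
      (Finset.univ.filter
        (fun c : Fin (p+1) → Fin (q+1) => ∀ a b : Fin (p+1), a < b → c a < c b))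
      (fun c => c (Fin.last p) = Fin.last q)]
  congr 1
  · -- c last = last : corresponds to strictly mono Fin p → Fin q
    rw [Finset.mul_sum]
    refine Finset.sum_bij' (i := fun c hc => fun k : Fin p => Fin.castLT (c k.castSucc) ?_)
      (j := fun c' hc' => Fin.snoc (fun k => (c' k).castSucc) (Fin.last q)) ?_ ?_ ?_ ?_ ?_
    · -- castLT proof
      rw [Finset.mem_filter, Finset.mem_filter] at hc
      obtain ⟨⟨-, hP⟩, hlast⟩ := hc
      have h1 : c k.castSucc < c (Fin.last p) := hP _ _ (Fin.castSucc_lt_last k)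
      have h2 : (c (Fin.last p) : ℕ) = q := by rw [hlast]; rfl
      have := h1
      rw [Fin.lt_def] at this
      omega
    · -- hi : image in target filter
      intro c hc
      rw [Finset.mem_filter, Finset.mem_filter] at hc
      obtain ⟨⟨-, hP⟩, hlast⟩ := hc
      rw [Finset.mem_filter]
      refine ⟨Finset.mem_univ _, fun a b hab => ?_⟩
      have := hP a.castSucc b.castSucc (by rwa [Fin.castSucc_lt_castSucc_iff])
      rw [Fin.lt_def] at this ⊢
      exact this
    · -- hj : back image in source filter
      intro c' hc'
      rw [Finset.mem_filter] at hc'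
      obtain ⟨-, hP'⟩ := hc'
      rw [Finset.mem_filter, Finset.mem_filter]
      refine ⟨⟨Finset.mem_univ _, fun a b hab => ?_⟩, by simp⟩
      beta_reduce
      have ha : a ≠ Fin.last p := ne_of_lt (lt_of_lt_of_le hab (Fin.le_last b))
      obtain ⟨a', rfl⟩ := Fin.exists_castSucc_eq.2 ha
      rcases eq_or_lt_of_le (Fin.le_last b) with hb | hb
      · subst hb
        rw [Fin.snoc_castSucc, Fin.snoc_last]
        exact Fin.castSucc_lt_last _
      · have hbne : b ≠ Fin.last p := ne_of_lt hb
        obtain ⟨b', rfl⟩ := Fin.exists_castSucc_eq.2 hbne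
        rw [Fin.snoc_castSucc, Fin.snoc_castSucc, Fin.castSucc_lt_castSucc_iff]
        exact hP' a' b' (by rwa [Fin.castSucc_lt_castSucc_iff] at hab)
    · -- left inverse
      intro c hc
      rw [Finset.mem_filter, Finset.mem_filter] at hc
      obtain ⟨⟨-, hP⟩, hlast⟩ := hc
      funext k
      beta_reduce
      refine Fin.lastCases ?_ ?_ k
      · rw [Fin.snoc_last, hlast]
      · intro k'
        rw [Fin.snoc_castSucc]
        exact Fin.ext rfl
    · -- right inverse
      intro c' hc'
      funext k
      apply Fin.ext
      beta_reduce
      simp [Fin.snoc_castSucc]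
    · -- products agree
      intro c hc
      rw [Finset.mem_filter, Finset.mem_filter] at hc
      obtain ⟨⟨-, hP⟩, hlast⟩ := hc
      rw [Fin.prod_univ_castSucc]
      have h2 : (c (Fin.last p) : ℕ) = q := by rw [hlast]; rfl
      rw [mul_comm]
      simp only [h2]
      simp only [Fin.val_last]
      rfl
  · -- c last ≠ last : corresponds to strictly mono Fin (p+1) → Fin q
    refine Finset.sum_bij' (i := fun c hc => fun k : Fin (p+1) => Fin.castLT (c k) ?_)
      (j := fun c' hc' => fun k => (c' k).castSucc) ?_ ?_ ?_ ?_ ?_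
    · -- castLT proof
      rw [Finset.mem_filter, Finset.mem_filter] at hc
      obtain ⟨⟨-, hP⟩, hlast⟩ := hc
      have h1 : (c (Fin.last p) : ℕ) < q := by
        have h3 := (c (Fin.last p)).isLt
        have h4 : (c (Fin.last p) : ℕ) ≠ q := by
          intro h
          exact hlast (Fin.ext (by simpa using h))
        omega
      rcases eq_or_lt_of_le (Fin.le_last k) with h | h
      · rw [h]; exact h1
      · have := hP k (Fin.last p) h
        rw [Fin.lt_def] at this
        omega
    · intro c hc
      rw [Finset.mem_filter, Finset.mem_filter] at hc
      obtain ⟨⟨-, hP⟩, hlast⟩ := hc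
      rw [Finset.mem_filter]
      refine ⟨Finset.mem_univ _, fun a b hab => ?_⟩
      have := hP a b hab
      rw [Fin.lt_def] at this ⊢
      exact this
    · intro c' hc'
      rw [Finset.mem_filter] at hc'
      obtain ⟨-, hP'⟩ := hc'
      rw [Finset.mem_filter, Finset.mem_filter]
      refine ⟨⟨Finset.mem_univ _, fun a b hab => ?_⟩, ?_⟩
      · show (c' a).castSucc < (c' b).castSucc
        rw [Fin.castSucc_lt_castSucc_iff]
        exact hP' a b hab
      · show ¬ (c' (Fin.last p)).castSucc = Fin.last q
        intro h
        have h5 : ((c' (Fin.last p)).castSucc : ℕ) = q := by rw [h]; rfl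
        have h6 := (c' (Fin.last p)).isLt
        rw [Fin.coe_castSucc] at h5
        omega
    · intro c hc
      funext k
      apply Fin.ext
      rfl
    · intro c' hc'
      funext k
      apply Fin.ext
      rfl
    · intro c hc
      refine Finset.prod_congr rfl fun k _ => rfl

lemma R_rec (p r q : ℕ) :
    ∑ k ∈ Finset.range (p+2), esymmY (q+1) k * hsymmNegX (r+1) (p+1-k)
    = (X (Sum.inr (q+1)) - X (Sum.inl (r+1)))
        * (∑ k ∈ Finset.range (p+1), esymmY q k * hsymmNegX (r+1) (p-k))
      + ∑ k ∈ Finset.range (p+2), esymmY q k * hsymmNegX r (p+1-k) := by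
  have step1 : ∑ k ∈ Finset.range (p+2), esymmY (q+1) k * hsymmNegX (r+1) (p+1-k)
      = ∑ k ∈ Finset.range (p+2), esymmY q k * hsymmNegX (r+1) (p+1-k)
        + X (Sum.inr (q+1)) * ∑ k ∈ Finset.range (p+1), esymmY q k * hsymmNegX (r+1) (p-k) := by
    rw [Finset.sum_range_succ' (fun k => esymmY (q+1) k * hsymmNegX (r+1) (p+1-k)) (p+1),
        Finset.sum_range_succ' (fun k => esymmY q k * hsymmNegX (r+1) (p+1-k)) (p+1)]
    simp only [esymmY_succ, esymmY_zero, Nat.succ_sub_succ, Nat.sub_zero, add_mul]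
    rw [Finset.sum_add_distrib, Finset.mul_sum]
    simp only [mul_assoc]
    ring
  have step2 : ∑ k ∈ Finset.range (p+2), esymmY q k * hsymmNegX (r+1) (p+1-k)
      = ∑ k ∈ Finset.range (p+2), esymmY q k * hsymmNegX r (p+1-k)
        - X (Sum.inl (r+1)) * ∑ k ∈ Finset.range (p+1), esymmY q k * hsymmNegX (r+1) (p-k) := by
    rw [Finset.sum_range_succ (fun k => esymmY q k * hsymmNegX (r+1) (p+1-k)) (p+1),
        Finset.sum_range_succ (fun k => esymmY q k * hsymmNegX r (p+1-k)) (p+1)]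
    have hcong : ∀ k ∈ Finset.range (p+1),
        esymmY q k * hsymmNegX (r+1) (p+1-k)
          = esymmY q k * hsymmNegX r (p+1-k)
            - X (Sum.inl (r+1)) * (esymmY q k * hsymmNegX (r+1) (p-k)) := by
      intro k hk
      rw [Finset.mem_range] at hk
      have h1 : p+1-k = (p-k)+1 := by omega
      rw [h1, hsymmNegX_succ]
      ring
    rw [Finset.sum_congr rfl hcong, Finset.sum_sub_distrib, Finset.mul_sum]
    simp only [Nat.sub_self, hsymmNegX_zero]
    ring
  rw [step1, step2]
  ring

lemma key (p : ℕ) : ∀ r q : ℕ, q + 1 = p + r →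
    Lsum p q = ∑ k ∈ Finset.range (p+1), esymmY q k * hsymmNegX r (p-k) := by
  induction p with
  | zero =>
    intro r q h
    rw [Lsum_zero]
    simp [esymmY_zero, hsymmNegX_zero]
  | succ p ih =>
    intro r
    induction r with
    | zero =>
      intro q h
      have hq : p = q := by omega
      subst hq
      rw [Lsum_degenerate]
      rw [Finset.sum_range_succ]
      have h1 : ∀ k ∈ Finset.range (p+1),
          esymmY p k * hsymmNegX 0 (p+1-k) = 0 := by
        intro k hk
        rw [Finset.mem_range] at hk
        have : p+1-k = (p-k)+1 := by omega
        rw [this, hsymmNegX_novars, mul_zero]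
      rw [Finset.sum_congr rfl h1, Finset.sum_const_zero]
      rw [esymmY_overflow p (p+1) (by omega)]
      ring
    | succ r ihr =>
      intro q h
      obtain ⟨q', rfl⟩ : ∃ q'', q = q'' + 1 := ⟨p + r, by omega⟩
      have hq' : q' = p + r := by omega
      rw [Lsum_succ]
      have hx : q' + 1 - p = r + 1 := by omega
      rw [hx]
      rw [ih (r+1) q' (by omega), ihr q' (by omega)]
      exact (R_rec p r q').symm

/-- `∑_{1 ≤ c_1 < ⋯ < c_p ≤ p+r-1} ∏_{i=1}^p (y_{c_i} - x_{c_i-i+1})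
    = ∑_{k=0}^p e_k(y_1,…,y_{p+r-1}) · h_{p-k}(-x_1,…,-x_r)`.
The left-hand sum runs over strictly increasing sequences encoded as strictly
monotone functions `c : Fin p → Fin (p+r-1)` (0-based; the 1-based value of the
`(i+1)`-st entry is `c i + 1`). -/
theorem increasing_seq_sum_eq_esymm_hsymm (p r : ℕ) (hp : 1 ≤ p) (hr : 1 ≤ r) :
    ∑ c ∈ Finset.univ.filter
        (fun c : Fin p → Fin (p + r - 1) => ∀ a b : Fin p, a < b → c a < c b),
        ∏ i : Fin p,
          (X (Sum.inr ((c i : ℕ) + 1)) - X (Sum.inl ((c i : ℕ) + 1 - (i : ℕ))) : PolyXY)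
    = ∑ k ∈ Finset.range (p + 1), esymmY (p + r - 1) k * hsymmNegX r (p - k) := by
  have h := key p r (p + r - 1) (by omega)
  unfold Lsum at h
  exact h
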